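/- arXiv:1905.10991 — 4 statements merged into one kernel-verified Lean document; each statement's English description precedes it below -/
import Mathlib

section
/- Let k ≥ 1, let (i_1,…,i_k) be a strictly increasing k-tuple of nonnegative integers, let σ ∈ Σ_k, and let 1 ≤ m ≤ k−1. Then the two conditions σ̂(i_1) < … < σ̂(i_m) and σ̂(i_{m+1}) < … < σ̂(i_k) hold if and only if the two conditions σ(i_1) < … < σ(i_m) and σ(i_{m+1}) < … < σ(i_k) hold. -/
namespace Paper

/-- The hatted tuple `(σ̂(i_1), …, σ̂(i_k))`: the `s`-th component of the permuted tuple is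
`i (σ s)`, and the hat subtracts the number of strictly smaller entries to the right. -/
def hat {k : ℕ} (i : Fin k → ℕ) (σ : Equiv.Perm (Fin k)) (s : Fin k) : ℕ :=
  i (σ s) - (Finset.univ.filter (fun r : Fin k => s < r ∧ i (σ r) < i (σ s))).card

/-- `IncOn f lo hi` : the tuple `f` is strictly increasing on the (0-indexed) positions
`lo ≤ a < b < hi`. -/
def IncOn {k : ℕ} (f : Fin k → ℕ) (lo hi : ℕ) : Prop :=
  ∀ a b : Fin k, lo ≤ (a : ℕ) → a < b → (b : ℕ) < hi → f a < f b

end Paper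

/-! Since `σ` is a bijection, exactly `σ s` positions carry an entry smaller than `i (σ s)`, so
`σ̂ s = (i (σ s) - σ s) + #{r < s | σ r < σ s}`. The first summand is monotone in `σ s` because
`i` is strictly increasing; the second counts the smaller entries to the left of `s`. Hence an
ascent `σ a < σ b` at positions `a < b` gives `σ̂ a < σ̂ b`, while a descent `σ b < σ a` at adjacent
positions `a ⋖ b` gives `σ̂ b ≤ σ̂ a`, and monotonicity on a run of positions is decided by
adjacent pairs. -/

namespace Paper

open Finset

lemma card_filter_apply_lt {k : ℕ} (σ : Equiv.Perm (Fin k)) (t : Fin k) :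
    #{r | σ r < t} = t := by
  rw [← Fin.card_Iio t, ← card_map σ.toEmbedding]
  congr 1
  ext
  simp

lemma incOn_of_covBy {k : ℕ} {f : Fin k → ℕ} {lo up : ℕ}
    (h : ∀ a b : Fin k, a ⋖ b → lo ≤ (a : ℕ) → (b : ℕ) < up → f a < f b) : IncOn f lo up := by
  have hs : (Fin.val ⁻¹' Set.Ico lo up : Set (Fin k)).OrdConnected :=
    Set.ordConnected_Ico.preimage_mono Fin.val_strictMono.monotone
  have hmono : StrictMonoOn f (Fin.val ⁻¹' Set.Ico lo up) :=
    strictMonoOn_of_lt_succ hs fun a ha has hsas =>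
      h a _ (Order.covBy_succ_of_not_isMax ha) has.1 hsas.2
  intro a b hlo hab hup
  exact hmono ⟨hlo, (Fin.lt_def.mp hab).trans hup⟩ ⟨hlo.trans (Fin.lt_def.mp hab).le, hup⟩ hab

section StrictMono

variable {k : ℕ} {i : Fin k → ℕ}

lemma val_le_of_strictMono (hi : StrictMono i) (t : Fin k) : (t : ℕ) ≤ i t := by
  rw [← Fin.card_Iio t, ← Nat.card_Iio (i t)]
  exact card_le_card_of_injOn i (fun r hr => by simpa using hi (mem_Iio.mp hr)) hi.injective.injOn

lemma monotone_sub_val (hi : StrictMono i) : Monotone fun t => i t - t := by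
  intro a b hab
  have hgap : #(Ico a b) ≤ #(Ico (i a) (i b)) :=
    card_le_card_of_injOn i (fun r hr => by
      obtain ⟨har, hrb⟩ := mem_Ico.mp hr
      simpa using ⟨hi.monotone har, hi hrb⟩) hi.injective.injOn
  have hva := val_le_of_strictMono hi a
  have hiab := hi.monotone hab
  rw [Fin.card_Ico, Nat.card_Ico] at hgap
  simp only [Fin.le_def] at hab
  show i a - a ≤ i b - b
  omega

lemma hat_eq_sub_add_card (hi : StrictMono i) (σ : Equiv.Perm (Fin k)) (s : Fin k) :
    hat i σ s = (i (σ s) - σ s) + #{r | r < s ∧ σ r < σ s} := by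
  have hright : #{r | s < r ∧ i (σ r) < i (σ s)} = #{r | ¬ r < s ∧ σ r < σ s} := by
    congr 1
    ext r
    simp only [mem_filter, mem_univ, true_and, hi.lt_iff_lt, not_lt, and_congr_left_iff]
    intro h
    exact ⟨le_of_lt, fun hsr => lt_of_le_of_ne hsr (by rintro rfl; exact h.false)⟩
  have hsplit := card_filter_add_card_filter_not (s := {r | σ r < σ s}) (fun r => r < s)
  have hvs := val_le_of_strictMono hi (σ s)
  simp only [hat, hright, filter_filter, card_filter_apply_lt, and_comm] at hsplit ⊢
  omega

lemma hat_lt_hat_of_lt (hi : StrictMono i) (σ : Equiv.Perm (Fin k)) {a b : Fin k}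
    (hab : a < b) (hσ : σ a < σ b) : hat i σ a < hat i σ b := by
  have hleft : #{r | r < a ∧ σ r < σ a} < #{r | r < b ∧ σ r < σ b} := by
    refine card_lt_card (ssubset_iff.mpr ⟨a, by simp, fun r hr => ?_⟩)
    simp only [mem_insert, mem_filter, mem_univ, true_and] at hr ⊢
    rcases hr with rfl | ⟨hra, hσra⟩
    · exact ⟨hab, hσ⟩
    · exact ⟨hra.trans hab, hσra.trans hσ⟩
  rw [hat_eq_sub_add_card hi, hat_eq_sub_add_card hi]
  exact add_lt_add_of_le_of_lt (monotone_sub_val hi hσ.le) hleft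

lemma hat_le_hat_of_covBy (hi : StrictMono i) (σ : Equiv.Perm (Fin k)) {a b : Fin k}
    (hab : a ⋖ b) (hσ : σ b < σ a) : hat i σ b ≤ hat i σ a := by
  have hleft : #{r | r < b ∧ σ r < σ b} ≤ #{r | r < a ∧ σ r < σ a} := by
    refine card_le_card fun r hr => ?_
    simp only [mem_filter, mem_univ, true_and] at hr ⊢
    obtain ⟨hrb, hσrb⟩ := hr
    refine ⟨(hab.le_of_lt hrb).lt_of_ne ?_, hσrb.trans hσ⟩
    rintro rfl
    exact lt_asymm hσrb hσ
  rw [hat_eq_sub_add_card hi, hat_eq_sub_add_card hi]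
  exact add_le_add (monotone_sub_val hi hσ.le) hleft

lemma incOn_hat_iff (hi : StrictMono i) (σ : Equiv.Perm (Fin k)) (lo up : ℕ) :
    IncOn (hat i σ) lo up ↔ IncOn (fun s => i (σ s)) lo up := by
  constructor
  · intro h
    refine incOn_of_covBy fun a b hab hlo hup => hi (lt_of_not_ge fun hba => ?_)
    have hσ : σ b < σ a := hba.lt_of_ne (σ.injective.ne hab.lt.ne')
    exact (hat_le_hat_of_covBy hi σ hab hσ).not_gt (h a b hlo hab.lt hup)
  · intro h a b hlo hab hup
    exact hat_lt_hat_of_lt hi σ hab (hi.lt_iff_lt.mp (h a b hlo hab hup))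

end StrictMono

theorem hat_increasing_iff_increasing_general
    (k : ℕ) (i : Fin k → ℕ) (hi : StrictMono i)
    (σ : Equiv.Perm (Fin k)) (m : ℕ) :
    (IncOn (hat i σ) 0 m ∧ IncOn (hat i σ) m k) ↔
      (IncOn (fun s => i (σ s)) 0 m ∧ IncOn (fun s => i (σ s)) m k) := by
  rw [incOn_hat_iff hi σ, incOn_hat_iff hi σ]

/-- For a strictly increasing `k`-tuple `i`, a permutation `σ ∈ Σ_k` and
`1 ≤ m ≤ k-1`, the hatted tuple is strictly increasing on the first `m` and on the last
`k - m` positions if and only if the permuted tuple `s ↦ i (σ s)` is. -/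
theorem hat_increasing_iff_increasing
    (k : ℕ) (hk : 1 ≤ k) (i : Fin k → ℕ) (hi : StrictMono i)
    (σ : Equiv.Perm (Fin k)) (m : ℕ) (hm1 : 1 ≤ m) (hm2 : m ≤ k - 1) :
    (IncOn (hat i σ) 0 m ∧ IncOn (hat i σ) m k) ↔
      (IncOn (fun s => i (σ s)) 0 m ∧ IncOn (fun s => i (σ s)) m k) :=
  hat_increasing_iff_increasing_general k i hi σ m

end Paper
end

section
/- Let k ≥ 1, let (i_1,…,i_k) be a strictly increasing k-tuple of nonnegative integers, let σ ∈ Σ_k, and let 1 ≤ m ≤ k−1. If σ̂(i_1) < … < σ̂(i_m) and σ̂(i_{m+1}) < … < σ̂(i_k), then the last k−m hatted values coincide with the unhatted ones: σ̂(i_s) = σ(i_s) for all m+1 ≤ s ≤ k. -/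
/-!
Write `f = i ∘ σ`, so that `σ̂ s = f s - c s`, where `c s = rightSmallerCount f s` counts the
entries right of `s` smaller than `f s`. Going down from the last position, suppose `c` vanishes
beyond `s ≥ m`; then `f = σ̂` is strictly increasing beyond `s`, so the entries counted by `c s`
are distinct values in `[f (s+1), f s)`. Hence `c s > 0` would force
`σ̂ s ≥ f (s+1) = σ̂ (s+1)`, against the increase of `σ̂` on the second block.
-/

namespace Paper

open Finset

section RightSmallerCount

variable {α : Type*} [Fintype α] [LinearOrder α] (f : α → ℕ)

def rightSmallerCount (s : α) : ℕ := #{r | s < r ∧ f r < f s}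

variable {f}

theorem rightSmallerCount_eq_zero_iff {s : α} :
    rightSmallerCount f s = 0 ↔ ∀ r, s < r → f s ≤ f r := by
  simp [rightSmallerCount, Finset.filter_eq_empty_iff]

theorem rightSmallerCount_le_sub_of_covBy {s t : α} (hst : s ⋖ t)
    (hf : StrictMonoOn f (Set.Ici t)) : rightSmallerCount f s ≤ f s - f t := by
  rw [← Nat.card_Ico]
  refine card_le_card_of_injOn f (fun r hr => ?_) (hf.injOn.mono fun r hr => ?_)
  · simp only [coe_filter, mem_univ, true_and, Set.mem_ofPred_eq] at hr
    exact mem_Ico.2 ⟨hf.monotoneOn le_rfl (hst.ge_of_gt hr.1) (hst.ge_of_gt hr.1), hr.2⟩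
  · simp only [coe_filter, mem_univ, true_and, Set.mem_ofPred_eq] at hr
    exact hst.ge_of_gt hr.1

theorem rightSmallerCount_eq_zero_of_sub_lt {s t : α} (hst : s ⋖ t)
    (hf : StrictMonoOn f (Set.Ici t)) (hlt : f s - rightSmallerCount f s < f t) :
    rightSmallerCount f s = 0 := by
  have hle := rightSmallerCount_le_sub_of_covBy hst hf
  omega

theorem rightSmallerCount_eq_zero_of_strictMonoOn_sub {m : α}
    (h : StrictMonoOn (fun s => f s - rightSmallerCount f s) (Set.Ici m)) :
    ∀ s, m ≤ s → rightSmallerCount f s = 0 := by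
  intro s
  induction s using WellFoundedGT.induction with
  | _ s ih =>
  intro hms
  by_contra hne
  obtain ⟨r, hsr, -⟩ : ∃ r, s < r ∧ f r < f s := by
    simpa [rightSmallerCount_eq_zero_iff] using hne
  obtain ⟨t, hst, -⟩ := exists_covBy_le_of_lt hsr
  have hmt : m ≤ t := hms.trans hst.le
  have hsub : Set.EqOn (fun u => f u - rightSmallerCount f u) f (Set.Ici t) := fun u hu => by
    dsimp only
    rw [ih u (hst.lt.trans_le hu) (hmt.trans hu), Nat.sub_zero]
  have hft : StrictMonoOn f (Set.Ici t) := (h.mono (Set.Ici_subset_Ici.2 hmt)).congr hsub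
  refine hne (rightSmallerCount_eq_zero_of_sub_lt hst hft ?_)
  simpa only [hsub (Set.self_mem_Ici : t ∈ Set.Ici t)] using h hms hmt hst.lt

end RightSmallerCount

theorem hat_eq_sub_rightSmallerCount {k : ℕ} (i : Fin k → ℕ) (σ : Equiv.Perm (Fin k)) :
    hat i σ = fun s => (i ∘ σ) s - rightSmallerCount (i ∘ σ) s :=
  rfl

theorem IncOn.strictMonoOn_Ici {k m : ℕ} {f : Fin k → ℕ} (h : IncOn f m k) (hm : m < k) :
    StrictMonoOn f (Set.Ici ⟨m, hm⟩) :=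
  fun a ha b _ hab => h a b ha hab b.isLt

theorem hat_eq_on_second_block_general
    (k : ℕ) (i : Fin k → ℕ)
    (σ : Equiv.Perm (Fin k)) (m : ℕ)
    (h2 : IncOn (hat i σ) m k) :
    ∀ s : Fin k, m ≤ (s : ℕ) → hat i σ s = i (σ s) := by
  intro s hms
  have hm : m < k := hms.trans_lt s.isLt
  have hinv : rightSmallerCount (i ∘ σ) s = 0 := by
    refine rightSmallerCount_eq_zero_of_strictMonoOn_sub (m := ⟨m, hm⟩) ?_ s hms
    rw [← hat_eq_sub_rightSmallerCount]
    exact h2.strictMonoOn_Ici hm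
  simp only [hat_eq_sub_rightSmallerCount, hinv, Nat.sub_zero, Function.comp_apply]

/-- For a strictly increasing `k`-tuple `i`, a permutation `σ ∈ Σ_k` and
`1 ≤ m ≤ k-1`, if the hatted tuple is strictly increasing on the first `m` and on the last
`k - m` positions, then on the last `k - m` positions the hatted values coincide with the
unhatted ones: `σ̂(i_s) = σ(i_s)` for `m + 1 ≤ s ≤ k` (0-indexed: `m ≤ s`). -/
theorem hat_eq_on_second_block
    (k : ℕ) (hk : 1 ≤ k) (i : Fin k → ℕ) (hi : StrictMono i)
    (σ : Equiv.Perm (Fin k)) (m : ℕ) (hm1 : 1 ≤ m) (hm2 : m ≤ k - 1)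
    (h1 : IncOn (hat i σ) 0 m) (h2 : IncOn (hat i σ) m k) :
    ∀ s : Fin k, m ≤ (s : ℕ) → hat i σ s = i (σ s) :=
  hat_eq_on_second_block_general k i σ m h2

end Paper
end

section
/- Let k ≥ 1 and 0 ≤ m ≤ k, and let (j_1,…,j_m) and (j_{m+1},…,j_k) be two strictly increasing tuples of nonnegative integers (either may be empty). Then there exist a strictly increasing k-tuple (i_1,…,i_k) of nonnegative integers and a permutation σ ∈ Σ_k satisfying σ(i_1) < … < σ(i_m) and σ(i_{m+1}) < … < σ(i_k), such that σ̂(i_s) = j_s for all 1 ≤ s ≤ k; moreover the pair ((i_1,…,i_k), σ) with these properties is unique. -/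
/-!
Only the permuted tuple `w = i ∘ σ` matters: a strictly increasing `i` and a permutation `σ` are
recovered uniquely from any injective `w` by sorting. As `w` increases on each block, `σ̂` equals
`w` on the second block, which forces `w = j` there. On the first block, `σ̂(s)` is `w s` minus
the number of second-block values of `j` below `w s`, that is, the number of integers below `w s`
that avoid those values; since `w s` avoids them too, it is the `(j s)`-th such integer
(counting from `0`).
-/

namespace Paper

theorem existsUnique_strictMono_comp_eq {α : Type*} [LinearOrder α] {n : ℕ} {w : Fin n → α}
    (hw : Function.Injective w) :
    ∃! p : (Fin n → α) × Equiv.Perm (Fin n), StrictMono p.1 ∧ p.1 ∘ p.2 = w := by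
  refine ⟨(w ∘ Tuple.sort w, (Tuple.sort w)⁻¹), ⟨?_, ?_⟩, ?_⟩
  · exact (Tuple.monotone_sort w).strictMono_of_injective (hw.comp (Tuple.sort w).injective)
  · ext s; simp
  · rintro ⟨i, σ⟩ ⟨hi, rfl⟩
    have hi' : i = (i ∘ σ) ∘ ⇑σ⁻¹ := by ext; simp
    have hsorted : (i ∘ σ) ∘ ⇑σ⁻¹ = (i ∘ σ) ∘ Tuple.sort (i ∘ σ) :=
      Tuple.unique_monotone (hi' ▸ hi.monotone) (Tuple.monotone_sort _)
    have hσ : σ⁻¹ = Tuple.sort (i ∘ σ) := Equiv.ext fun s => hw (congrFun hsorted s)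
    simp only [Prod.mk.injEq]
    exact ⟨hi'.trans hsorted, by rw [← hσ, inv_inv]⟩

variable {k m : ℕ} {j : Fin k → ℕ}

theorem IncOn.eq_of_apply_eq {f : Fin k → ℕ} {lo hi : ℕ} (hf : IncOn f lo hi) {a b : Fin k}
    (ha : lo ≤ (a : ℕ)) (ha' : (a : ℕ) < hi) (hb : lo ≤ (b : ℕ)) (hb' : (b : ℕ) < hi)
    (hab : f a = f b) : a = b := by
  rcases lt_trichotomy a b with h | h | h
  · exact absurd hab (hf a b ha h hb').ne
  · exact h
  · exact absurd hab (hf b a hb h ha').ne'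

variable (m j) in
def tailValues : Finset ℕ := (Finset.univ.filter fun r : Fin k => m ≤ (r : ℕ)).image j

theorem infinite_notMem_tailValues : {n | n ∉ tailValues m j}.Infinite :=
  (tailValues m j).finite_toSet.infinite_compl

theorem card_filter_tail_lt (h2 : IncOn j m k) (n : ℕ) :
    (Finset.univ.filter fun r : Fin k => m ≤ (r : ℕ) ∧ j r < n).card =
      Nat.count (· ∈ tailValues m j) n := by
  have himage : {x ∈ Finset.range n | x ∈ tailValues m j} =
      (Finset.univ.filter fun r : Fin k => m ≤ (r : ℕ) ∧ j r < n).image j := by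
    ext x
    simp only [tailValues, Finset.mem_filter, Finset.mem_range, Finset.mem_image,
      Finset.mem_univ, true_and]
    grind
  rw [Nat.count_eq_card_filter_range, himage, Finset.card_image_of_injOn]
  intro a ha b hb hab
  simp only [Finset.coe_filter, Finset.mem_univ, true_and, Set.mem_ofPred_eq] at ha hb
  exact h2.eq_of_apply_eq ha.1 a.isLt hb.1 b.isLt hab

theorem sub_card_filter_tail_lt (h2 : IncOn j m k) (n : ℕ) :
    n - (Finset.univ.filter fun r : Fin k => m ≤ (r : ℕ) ∧ j r < n).card =
      Nat.count (· ∉ tailValues m j) n := by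
  have hsplit : Nat.count (· ∈ tailValues m j) n + Nat.count (· ∉ tailValues m j) n = n := by
    simp only [Nat.count_eq_card_filter_range]
    rw [Finset.card_filter_add_card_filter_not, Finset.card_range]
  rw [card_filter_tail_lt h2]
  omega

section hat

variable {i : Fin k → ℕ} {σ : Equiv.Perm (Fin k)} {s : Fin k}

theorem hat_eq_of_le (hw : IncOn (fun s => i (σ s)) m k) (hs : m ≤ (s : ℕ)) :
    hat i σ s = i (σ s) := by
  have hempty : (Finset.univ.filter fun r : Fin k => s < r ∧ i (σ r) < i (σ s)) = ∅ :=
    Finset.filter_false_of_mem fun r _ ⟨hsr, hlt⟩ => (hw s r hs hsr r.isLt).not_gt hlt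
  simp [hat, hempty]

theorem hat_eq_count_of_lt (h2 : IncOn j m k) (hw : IncOn (fun s => i (σ s)) 0 m)
    (htail : ∀ r : Fin k, m ≤ (r : ℕ) → i (σ r) = j r) (hs : (s : ℕ) < m) :
    hat i σ s = Nat.count (· ∉ tailValues m j) (i (σ s)) := by
  have hfilter : (Finset.univ.filter fun r : Fin k => s < r ∧ i (σ r) < i (σ s)) =
      Finset.univ.filter fun r : Fin k => m ≤ (r : ℕ) ∧ j r < i (σ s) := by
    ext r
    simp only [Finset.mem_filter, Finset.mem_univ, true_and]
    constructor
    · rintro ⟨hsr, hlt⟩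
      have hr : m ≤ (r : ℕ) := not_lt.1 fun hr => (hw s r (Nat.zero_le _) hsr hr).not_gt hlt
      exact ⟨hr, htail r hr ▸ hlt⟩
    · rintro ⟨hr, hlt⟩
      exact ⟨Fin.lt_def.2 (by omega), (htail r hr).symm ▸ hlt⟩
  rw [hat, hfilter, sub_card_filter_tail_lt h2]

end hat

variable (m j) in
noncomputable def canonicalTuple (s : Fin k) : ℕ :=
  if (s : ℕ) < m then Nat.nth (· ∉ tailValues m j) (j s) else j s

theorem canonicalTuple_of_lt {s : Fin k} (hs : (s : ℕ) < m) :
    canonicalTuple m j s = Nat.nth (· ∉ tailValues m j) (j s) :=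
  if_pos hs

theorem canonicalTuple_of_le {s : Fin k} (hs : m ≤ (s : ℕ)) : canonicalTuple m j s = j s :=
  if_neg (not_lt.2 hs)

theorem canonicalTuple_notMem_tailValues {s : Fin k} (hs : (s : ℕ) < m) :
    canonicalTuple m j s ∉ tailValues m j := by
  rw [canonicalTuple_of_lt hs]
  exact Nat.nth_mem_of_infinite infinite_notMem_tailValues _

theorem apply_mem_tailValues {r : Fin k} (hr : m ≤ (r : ℕ)) : j r ∈ tailValues m j :=
  Finset.mem_image_of_mem j (by simpa using hr)

theorem incOn_canonicalTuple_zero (h1 : IncOn j 0 m) : IncOn (canonicalTuple m j) 0 m := by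
  intro a b _ hab hb
  rw [canonicalTuple_of_lt ((Fin.lt_def.1 hab).trans hb), canonicalTuple_of_lt hb]
  exact Nat.nth_strictMono infinite_notMem_tailValues (h1 a b (Nat.zero_le _) hab hb)

theorem incOn_canonicalTuple (h2 : IncOn j m k) : IncOn (canonicalTuple m j) m k := by
  intro a b ha hab hb
  rw [canonicalTuple_of_le ha, canonicalTuple_of_le (ha.trans (Fin.lt_def.1 hab).le)]
  exact h2 a b ha hab hb

theorem canonicalTuple_injective (h1 : IncOn j 0 m) (h2 : IncOn j m k) :
    Function.Injective (canonicalTuple m j) := by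
  have hsep : ∀ a b : Fin k, (a : ℕ) < m → m ≤ (b : ℕ) →
      canonicalTuple m j a ≠ canonicalTuple m j b := fun a b ha hb h => by
    have hmem : canonicalTuple m j b ∈ tailValues m j :=
      (canonicalTuple_of_le hb).symm ▸ apply_mem_tailValues hb
    exact canonicalTuple_notMem_tailValues ha (h ▸ hmem)
  intro a b hab
  rcases lt_or_ge (a : ℕ) m with ha | ha <;> rcases lt_or_ge (b : ℕ) m with hb | hb
  · rw [canonicalTuple_of_lt ha, canonicalTuple_of_lt hb] at hab
    exact h1.eq_of_apply_eq (Nat.zero_le _) ha (Nat.zero_le _) hb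
      (Nat.nth_injective infinite_notMem_tailValues hab)
  · exact absurd hab (hsep a b ha hb)
  · exact absurd hab.symm (hsep b a hb ha)
  · rw [canonicalTuple_of_le ha, canonicalTuple_of_le hb] at hab
    exact h2.eq_of_apply_eq ha a.isLt hb b.isLt hab

theorem incOn_incOn_hat_iff_comp_eq_canonicalTuple (h1 : IncOn j 0 m) (h2 : IncOn j m k)
    {i : Fin k → ℕ} (hi : Function.Injective i) (σ : Equiv.Perm (Fin k)) :
    (IncOn (fun s => i (σ s)) 0 m ∧ IncOn (fun s => i (σ s)) m k ∧ ∀ s, hat i σ s = j s) ↔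
      i ∘ σ = canonicalTuple m j := by
  constructor
  · rintro ⟨hw1, hw2, hhat⟩
    have htail : ∀ r : Fin k, m ≤ (r : ℕ) → i (σ r) = j r := fun r hr =>
      (hat_eq_of_le hw2 hr).symm.trans (hhat r)
    funext s
    rcases lt_or_ge (s : ℕ) m with hs | hs
    · have hgap : i (σ s) ∉ tailValues m j := by
        simp only [tailValues, Finset.mem_image, Finset.mem_filter, Finset.mem_univ, true_and]
        rintro ⟨r, hr, hjr⟩
        have hrs : σ r = σ s := hi ((htail r hr).trans hjr)
        exact absurd (σ.injective hrs ▸ hr) (not_le.2 hs)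
      have hcount := (hat_eq_count_of_lt h2 hw1 htail hs).symm.trans (hhat s)
      rw [Function.comp_apply, canonicalTuple_of_lt hs, ← hcount, Nat.nth_count hgap]
    · rw [Function.comp_apply, canonicalTuple_of_le hs, htail s hs]
  · intro hw
    have hw1 : IncOn (i ∘ σ) 0 m := hw ▸ incOn_canonicalTuple_zero h1
    have hw2 : IncOn (i ∘ σ) m k := hw ▸ incOn_canonicalTuple h2
    have htail : ∀ r : Fin k, m ≤ (r : ℕ) → i (σ r) = j r := fun r hr =>
      (congrFun hw r).trans (canonicalTuple_of_le hr)
    refine ⟨hw1, hw2, fun s => ?_⟩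
    rcases lt_or_ge (s : ℕ) m with hs | hs
    · rw [hat_eq_count_of_lt h2 hw1 htail hs, show i (σ s) = _ from congrFun hw s,
        canonicalTuple_of_lt hs, Nat.count_nth_of_infinite infinite_notMem_tailValues]
    · rw [hat_eq_of_le hw2 hs, htail s hs]

theorem exists_unique_tuple_and_perm_with_hat_general
    (k m : ℕ) (j : Fin k → ℕ)
    (h1 : IncOn j 0 m) (h2 : IncOn j m k) :
    ∃! p : (Fin k → ℕ) × Equiv.Perm (Fin k),
      StrictMono p.1 ∧ IncOn (fun s => p.1 (p.2 s)) 0 m ∧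
        IncOn (fun s => p.1 (p.2 s)) m k ∧ ∀ s, hat p.1 p.2 s = j s :=
  (existsUnique_congr fun p => and_congr_right fun hp =>
    incOn_incOn_hat_iff_comp_eq_canonicalTuple h1 h2 hp.injective p.2).mpr
      (existsUnique_strictMono_comp_eq (canonicalTuple_injective h1 h2))

/-- Given `k ≥ 1`, `0 ≤ m ≤ k` and a `k`-tuple `j` of nonnegative integers
which is strictly increasing on the first `m` and on the last `k - m` positions, there is a
unique pair `(i, σ)` of a strictly increasing `k`-tuple `i` and a permutation `σ ∈ Σ_k` with
the permuted tuple strictly increasing on the first `m` and on the last `k - m` positions,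
such that `σ̂(i_s) = j_s` for all `s`. -/
theorem exists_unique_tuple_and_perm_with_hat
    (k m : ℕ) (hk : 1 ≤ k) (hm : m ≤ k) (j : Fin k → ℕ)
    (h1 : IncOn j 0 m) (h2 : IncOn j m k) :
    ∃! p : (Fin k → ℕ) × Equiv.Perm (Fin k),
      StrictMono p.1 ∧ IncOn (fun s => p.1 (p.2 s)) 0 m ∧
        IncOn (fun s => p.1 (p.2 s)) m k ∧ ∀ s, hat p.1 p.2 s = j s :=
  exists_unique_tuple_and_perm_with_hat_general k m j h1 h2

end Paper
end

section
/- Let n ≥ 0 and suppose the sequence (0,1,…,n) is partitioned, in order, into consecutive blocks a_1, b_1, a_2, b_2, …, a_s, b_s, a_{s+1} (each block a set of consecutive integers, blocks possibly empty). Let σ be the permutation of {0,1,…,n} that rearranges the sequence of blocks (a_1, b_1, a_2, b_2, …, a_s, b_s, a_{s+1}) into (a_1, a_2, …, a_s, a_{s+1}, b_1, b_2, …, b_s), preserving the order of elements within each block. Then the number of inversions of σ equals |a_2|·|b_1| + |a_3|·(|b_1|+|b_2|) + … + |a_s|·(|b_1|+…+|b_{s−1}|) + |a_{s+1}|·(|b_1|+…+|b_s|),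 where |c| denotes the number of elements of the block c. -/
/-! The rearranged sequence is the concatenation of two increasing lists, the `a`-blocks
followed by the `b`-blocks, so every inversion pairs an entry `x` of some `a_i` with a smaller
entry of some `b_j`. The blocks are intervals laid out as `a_1 b_1 a_2 b_2 …`, so the entries
of `b_j` lie below `x` exactly when `j < i`; each of the `|a_i|` entries of `a_i` therefore
contributes `|b_1| + … + |b_{i-1}|`. -/

namespace Paper

/-- The starting position, in the original sequence `(0, 1, …, n)`, of the block `a_{i+1}`
in the partition into consecutive blocks `a_1, b_1, a_2, b_2, …, a_s, b_s, a_{s+1}`,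
where `a, b : ℕ → ℕ` give the sizes of the blocks (`a i = |a_{i+1}|`, `b i = |b_{i+1}|`). -/
def blockStartA (a b : ℕ → ℕ) (i : ℕ) : ℕ := ∑ l ∈ Finset.range i, (a l + b l)

/-- The rearranged sequence `(a_1, a_2, …, a_s, a_{s+1}, b_1, b_2, …, b_s)`, as the list of
its entries. -/
def outList (s : ℕ) (a b : ℕ → ℕ) : List ℕ :=
  (((List.range (s + 1)).map
      (fun i => (List.range (a i)).map (fun o => blockStartA a b i + o))).flatten) ++
  (((List.range s).map
      (fun i => (List.range (b i)).map (fun o => blockStartA a b i + a i + o))).flatten)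

/-- The number of inversions of a sequence of naturals: the number of pairs of positions
`p < q` whose entries are out of order. -/
def invCount (l : List ℕ) : ℕ :=
  ((Finset.range l.length ×ˢ Finset.range l.length).filter
    (fun pq => pq.1 < pq.2 ∧ l.getD pq.2 0 < l.getD pq.1 0)).card

open List

lemma sum_range_length_getD_ite {α : Type*} (l : List α) (d : α) (P : α → Prop)
    [DecidablePred P] :
    ∑ q ∈ Finset.range l.length, (if P (l.getD q d) then 1 else 0) = l.countP (P ·) := by
  induction l with
  | nil => simp
  | cons x l ih =>
    rw [length_cons, Finset.sum_range_succ', countP_cons]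
    simp only [getD_cons_succ, getD_cons_zero, ih]
    split_ifs <;> simp_all

lemma sum_map_range {M : Type*} [AddCommMonoid M] (n : ℕ) (f : ℕ → M) :
    ((range n).map f).sum = ∑ i ∈ Finset.range n, f i := rfl

lemma range_append_range' (m n : ℕ) : range m ++ range' m n = range (m + n) := by
  rw [range_add, range'_eq_map_range]

lemma pairwise_lt_flatMap_range' {ι : Type*} {l : List ι} {start len : ι → ℕ}
    (h : l.Pairwise fun i j => start i + len i ≤ start j) :
    (l.flatMap fun i => range' (start i) (len i)).Pairwise (· < ·) := by
  refine pairwise_flatMap.mpr ⟨fun i _ => pairwise_lt_range', h.imp fun hij x hx y hy => ?_⟩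
  rw [mem_range'_1] at hx hy
  omega

lemma countP_lt_range'_of_add_le {start len x : ℕ} (h : start + len ≤ x) :
    (range' start len).countP (· < x) = len := by
  rw [countP_eq_length.mpr fun y hy => by simp at hy ⊢; omega, length_range']

lemma countP_lt_range'_of_le {start len x : ℕ} (h : x ≤ start) :
    (range' start len).countP (· < x) = 0 :=
  countP_eq_zero.mpr fun y hy => by simp at hy ⊢; omega

lemma invCount_nil : invCount [] = 0 := rfl

lemma invCount_cons (x : ℕ) (l : List ℕ) :
    invCount (x :: l) = l.countP (· < x) + invCount l := by
  simp only [invCount, Finset.card_filter, Finset.sum_product, length_cons,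
    Finset.sum_range_succ', getD_cons_succ, getD_cons_zero, Nat.succ_lt_succ_iff,
    Nat.not_lt_zero, false_and, if_false, add_zero, Nat.zero_lt_succ, true_and]
  rw [sum_range_length_getD_ite l 0 (· < x), add_comm]

lemma invCount_append (l₁ l₂ : List ℕ) :
    invCount (l₁ ++ l₂) =
      invCount l₁ + invCount l₂ + (l₁.map fun x => l₂.countP (· < x)).sum := by
  induction l₁ with
  | nil => simp [invCount_nil]
  | cons x l₁ ih =>
    rw [cons_append, invCount_cons, invCount_cons, ih, countP_append, map_cons, sum_cons]
    ring

lemma invCount_eq_zero_of_pairwise_le {l : List ℕ} (h : l.Pairwise (· ≤ ·)) :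
    invCount l = 0 := by
  induction l with
  | nil => rfl
  | cons x l ih =>
    rw [pairwise_cons] at h
    rw [invCount_cons, ih h.2, countP_eq_zero.mpr fun y hy => by simpa using h.1 y hy]

def blockA (a b : ℕ → ℕ) (i : ℕ) : List ℕ := range' (blockStartA a b i) (a i)

def blockB (a b : ℕ → ℕ) (i : ℕ) : List ℕ := range' (blockStartA a b i + a i) (b i)

section Blocks

variable (a b : ℕ → ℕ)

local notation "S" => blockStartA a b

lemma blockStartA_succ (i : ℕ) : S (i + 1) = S i + (a i + b i) := Finset.sum_range_succ _ i

lemma blockStartA_add_add_le {i j : ℕ} (h : i < j) : S i + a i + b i ≤ S j := by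
  rw [add_assoc, ← blockStartA_succ]
  exact Finset.sum_le_sum_of_subset (Finset.range_subset_range.mpr h)

lemma blockStartA_add_le_add {i j : ℕ} (h : i ≤ j) : S i + a i ≤ S j + a j := by
  rcases h.eq_or_lt with rfl | h
  · rfl
  · have := blockStartA_add_add_le a b h
    omega

lemma blockStartA_add_eq_sum (s : ℕ) :
    S s + a s = (∑ l ∈ Finset.range (s + 1), a l) + ∑ l ∈ Finset.range s, b l := by
  rw [blockStartA, Finset.sum_add_distrib, Finset.sum_range_succ]
  ring

lemma flatMap_blockA_append_blockB (m : ℕ) :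
    (range m).flatMap (fun i => blockA a b i ++ blockB a b i) = range (S m) := by
  induction m with
  | zero => rfl
  | succ m ih =>
    rw [range_succ, flatMap_append, ih, flatMap_singleton, blockA, blockB, range'_append_1,
      blockStartA_succ, range_append_range']

lemma outList_eq (s : ℕ) :
    outList s a b = (range (s + 1)).flatMap (blockA a b) ++ (range s).flatMap (blockB a b) := by
  unfold blockA blockB
  simp only [outList, flatMap_def, range'_eq_map_range]

lemma outList_perm_range (s : ℕ) : outList s a b ~ range (S s + a s) :=
  calc outList s a b
      = (range s).flatMap (blockA a b) ++ (blockA a b s ++ (range s).flatMap (blockB a b)) := by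
        rw [outList_eq, range_succ, flatMap_append, flatMap_singleton, append_assoc]
    _ ~ ((range s).flatMap (blockA a b) ++ (range s).flatMap (blockB a b)) ++ blockA a b s := by
        rw [append_assoc]
        exact perm_append_comm.append_left _
    _ ~ (range s).flatMap (fun i => blockA a b i ++ blockB a b i) ++ blockA a b s :=
        (flatMap_append_perm _ _ _).append_right _
    _ = range (S s + a s) := by
        rw [flatMap_blockA_append_blockB, blockA, range_append_range']

lemma pairwise_lt_flatMap_blockA (s : ℕ) : ((range s).flatMap (blockA a b)).Pairwise (· < ·) :=
  pairwise_lt_flatMap_range' <| pairwise_lt_range.imp fun hij =>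
    le_self_add.trans (blockStartA_add_add_le a b hij)

lemma pairwise_lt_flatMap_blockB (s : ℕ) : ((range s).flatMap (blockB a b)).Pairwise (· < ·) :=
  pairwise_lt_flatMap_range' <| pairwise_lt_range.imp fun hij =>
    (blockStartA_add_add_le a b hij).trans le_self_add

lemma countP_lt_flatMap_blockB {s i x : ℕ} (hi : i ≤ s) (hx : x ∈ blockA a b i) :
    ((range s).flatMap (blockB a b)).countP (· < x) = ∑ j ∈ Finset.range i, b j := by
  rw [blockA, mem_range'_1] at hx
  have hblock (j : ℕ) : (blockB a b j).countP (· < x) = if j < i then b j else 0 := by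
    split_ifs with hji
    · exact countP_lt_range'_of_add_le ((blockStartA_add_add_le a b hji).trans hx.1)
    · exact countP_lt_range'_of_le (hx.2.trans_le (blockStartA_add_le_add a b (not_lt.mp hji))).le
  have hfilter : (Finset.range s).filter (· < i) = Finset.range i := by
    ext j
    simp only [Finset.mem_filter, Finset.mem_range]
    omega
  rw [countP_flatMap, sum_map_range, Function.comp_def]
  simp only [hblock]
  rw [← Finset.sum_filter, hfilter]

lemma invCount_outList (s : ℕ) :
    invCount (outList s a b) = ∑ i ∈ Finset.range (s + 1), a i * ∑ j ∈ Finset.range i, b j := by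
  rw [outList_eq, invCount_append,
    invCount_eq_zero_of_pairwise_le ((pairwise_lt_flatMap_blockA a b _).imp le_of_lt),
    invCount_eq_zero_of_pairwise_le ((pairwise_lt_flatMap_blockB a b _).imp le_of_lt),
    zero_add, zero_add, map_flatMap, flatMap_def, sum_flatten, map_map, sum_map_range]
  refine Finset.sum_congr rfl fun i hi => ?_
  rw [Function.comp_apply, map_congr_left fun x hx =>
      countP_lt_flatMap_blockB a b (Nat.lt_succ_iff.mp (Finset.mem_range.mp hi)) hx,
    map_const', sum_replicate_nat, blockA, length_range']

end Blocks

/-- Partition the sequence `(0, 1, …, n)`, in order, into consecutive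
(possibly empty) blocks `a_1, b_1, a_2, b_2, …, a_s, b_s, a_{s+1}` of sizes `a 0, b 0, a 1,
b 1, …, a (s-1), b (s-1), a s`, and let `σ` be the permutation rearranging the blocks into
`(a_1, a_2, …, a_s, a_{s+1}, b_1, b_2, …, b_s)` (preserving the order of the elements inside
each block); its rearranged sequence is `outList s a b`, which is a permutation of
`(0, 1, …, n)`.  Then the number of inversions of `σ` equals
`|a_2|·|b_1| + |a_3|·(|b_1|+|b_2|) + … + |a_{s+1}|·(|b_1|+…+|b_s|)`. -/
theorem inversions_of_block_shuffle
    (n s : ℕ) (a b : ℕ → ℕ)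
    (hsum : (∑ l ∈ Finset.range (s + 1), a l) + (∑ l ∈ Finset.range s, b l) = n + 1) :
    List.Perm (outList s a b) (List.range (n + 1)) ∧
    invCount (outList s a b) =
      ∑ i ∈ Finset.range (s + 1), a i * (∑ j ∈ Finset.range i, b j) := by
  refine ⟨?_, invCount_outList a b s⟩
  rw [← hsum, ← blockStartA_add_eq_sum]
  exact outList_perm_range a b s

end Paper
end
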